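/- Let c_exp > 0 and d > 0 be real constants, let u : [0,∞) → ℝ be a continuous function, and let u_max ≥ 0 satisfy |u(t)| ≤ u_max < d·c_exp for all t ≥ 0. Let x : [0,∞) → ℝ be differentiable with x(0) = q > d and x'(t) = −c_exp·sat_d(x(t)) + u(t) for all t ≥ 0. Set c_lin := d·c_exp − u_max > 0 and t_c := (q − d)/c_lin > 0. Then for every t ≥ 0, x(t) ≤ linexp(t; q, c_lin, c_exp, t_c) + 1_{[t_c,∞)}(t)·(1 − exp(−c_exp·(t − t_c)))·u_max/c_exp. -/

import Mathlib

/-!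
Comparison with an explicit upper solution of `y' = -c_exp·sat_d(y) + u_max`. Since `sat_d` is
monotone, `x` can never cross such an upper solution from below: wherever `x` has caught up with
it, `x` grows no faster. Started at `q`, the upper solution stays above `d`, so it decreases
linearly with slope `-c_lin` until it reaches `d` at the crossing time `t_c`. From then on it
stays in `[-d, d]`, where the equation is linear, and relaxes exponentially towards
`u_max / c_exp`.
-/

open Set

/-- The saturation function `sat_d : ℝ → [−d,d]`. -/
noncomputable def sat (d x : ℝ) : ℝ := max (-d) (min d x)

/-- The linear-exponential function `linexp(t; q, c_lin, c_exp, t_c)`. -/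
noncomputable def linexp (q clin cexp tc t : ℝ) : ℝ :=
  if t ≤ tc then q - clin * t else (q - clin * tc) * Real.exp (-cexp * (t - tc))

lemma sat_mono (d : ℝ) : Monotone (sat d) :=
  fun _ _ h => max_le_max le_rfl (min_le_min le_rfl h)

lemma sat_of_le {d x : ℝ} (hd : 0 ≤ d) (h : d ≤ x) : sat d x = d := by
  rw [sat, min_eq_left h, max_eq_right (by linarith)]

lemma sat_of_mem_Icc {d x : ℝ} (h : x ∈ Icc (-d) d) : sat d x = x := by
  rw [sat, min_eq_right h.2, max_eq_right h.1]

lemma linexp_of_le {q clin cexp tc t : ℝ} (h : t ≤ tc) : linexp q clin cexp tc t = q - clin * t :=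
  if_pos h

lemma linexp_of_ge {q clin cexp tc t : ℝ} (h : tc ≤ t) :
    linexp q clin cexp tc t = (q - clin * tc) * Real.exp (-cexp * (t - tc)) := by
  rcases h.eq_or_lt with rfl | h
  · simp [linexp]
  · exact if_neg h.not_ge

theorem image_le_of_deriv_right_le_deriv_boundary_of_ge {f f' : ℝ → ℝ} {a b : ℝ}
    (hf : ContinuousOn f (Icc a b)) (hf' : ∀ x ∈ Ico a b, HasDerivWithinAt f (f' x) (Ici x) x)
    {B B' : ℝ → ℝ} (ha : f a ≤ B a) (hB : ContinuousOn B (Icc a b))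
    (hB' : ∀ x ∈ Ico a b, HasDerivWithinAt B (B' x) (Ici x) x)
    (bound : ∀ x ∈ Ico a b, B x ≤ f x → f' x ≤ B' x) : ∀ ⦃x⦄, x ∈ Icc a b → f x ≤ B x := by
  have perturbed : ∀ x ∈ Icc a b, ∀ r > 0, f x ≤ B x + r * (x - a) := fun x hx r hr => by
    apply image_le_of_deriv_right_lt_deriv_boundary' hf hf'
    · rwa [sub_self, mul_zero, add_zero]
    · exact hB.add (continuousOn_const.mul (continuousOn_id.sub continuousOn_const))
    · intro y hy
      exact (hB' y hy).add (((hasDerivWithinAt_id y (Ici y)).sub_const a).const_mul r)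
    · intro y hy hfy
      have hBf : B y ≤ f y := by rw [hfy]; nlinarith [hy.1]
      linarith [bound y hy hBf]
    exact hx
  intro x hx
  have : ContinuousWithinAt (fun r => B x + r * (x - a)) (Ioi 0) 0 := by fun_prop
  convert! continuousWithinAt_const.closure_le _ this (perturbed x hx) using 1 <;> simp

section SaturatedODE

variable {cexp d umax : ℝ}

theorem le_of_sat_upper_solution {a b : ℝ} {x u B : ℝ → ℝ} (hc : 0 ≤ cexp)
    (hx : ContinuousOn x (Icc a b))
    (hx' : ∀ r ∈ Ico a b, HasDerivWithinAt x (-cexp * sat d (x r) + u r) (Ici r) r)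
    (hu : ∀ r ∈ Ico a b, u r ≤ umax) (hB : ContinuousOn B (Icc a b))
    (hB' : ∀ r ∈ Ico a b, HasDerivWithinAt B (-cexp * sat d (B r) + umax) (Ici r) r)
    (ha : x a ≤ B a) : ∀ ⦃s⦄, s ∈ Icc a b → x s ≤ B s :=
  image_le_of_deriv_right_le_deriv_boundary_of_ge hx hx' ha hB hB' fun r hr hBx => by
    have := mul_le_mul_of_nonneg_left (sat_mono d hBx) hc
    linarith [hu r hr]

theorem hasDerivAt_linear_phase {q clin s : ℝ} (hd : 0 ≤ d) (hclin : clin = d * cexp - umax)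
    (hs : d ≤ q - clin * s) :
    HasDerivAt (fun s => q - clin * s) (-cexp * sat d (q - clin * s) + umax) s := by
  rw [sat_of_le hd hs, show -cexp * d + umax = -clin by rw [hclin]; ring]
  simpa using ((hasDerivAt_id s).const_mul clin).const_sub q

theorem hasDerivAt_exponential_phase {tc s : ℝ} (hc : 0 < cexp) (humax0 : 0 ≤ umax)
    (humax : umax ≤ d * cexp) (hs : tc ≤ s) :
    HasDerivAt (fun s => umax / cexp + (d - umax / cexp) * Real.exp (-cexp * (s - tc)))
      (-cexp * sat d (umax / cexp + (d - umax / cexp) * Real.exp (-cexp * (s - tc))) + umax) s := by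
  have he0 := Real.exp_pos (-cexp * (s - tc))
  have he1 : Real.exp (-cexp * (s - tc)) ≤ 1 := Real.exp_le_one_iff.mpr (by nlinarith)
  have hmd : umax / cexp ≤ d := (div_le_iff₀ hc).mpr humax
  have hm0 : 0 ≤ umax / cexp := div_nonneg humax0 hc.le
  rw [sat_of_mem_Icc ⟨by nlinarith, by nlinarith⟩]
  refine (((((hasDerivAt_id' s).sub_const tc).const_mul (-cexp)).exp.const_mul
    (d - umax / cexp)).const_add (umax / cexp)).congr_deriv ?_
  field_simp
  ring

end SaturatedODE

theorem stmt6_general (cexp d q umax clin tc : ℝ) (hc : 0 < cexp) (hd : 0 < d) (hq : d < q)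
    (humax0 : 0 ≤ umax) (humax : umax < d * cexp)
    (hclin : clin = d * cexp - umax) (htc : tc = (q - d) / clin)
    (u : ℝ → ℝ)
    (hub : ∀ t ≥ (0:ℝ), |u t| ≤ umax)
    (x : ℝ → ℝ) (hx0 : x 0 = q)
    (hx : ∀ t ≥ (0:ℝ), HasDerivWithinAt x (-cexp * sat d (x t) + u t) (Set.Ici 0) t) :
    ∀ t ≥ (0:ℝ), x t ≤ linexp q clin cexp tc t +
      Set.indicator (Set.Ici tc)
        (fun s => (1 - Real.exp (-cexp * (s - tc))) * umax / cexp) t := by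
  intro t ht
  have hclin0 : 0 < clin := by rw [hclin]; linarith
  have htc0 : 0 ≤ tc := by rw [htc]; exact div_nonneg (by linarith) hclin0.le
  have hqd : q - clin * tc = d := by rw [htc]; field_simp; ring
  have hxc : ContinuousOn x (Ici 0) := fun r hr => (hx r hr).continuousWithinAt
  have hx' : ∀ r ≥ (0 : ℝ), HasDerivWithinAt x (-cexp * sat d (x r) + u r) (Ici r) r :=
    fun r hr => (hx r hr).mono (Ici_subset_Ici.mpr hr)
  have hu_le : ∀ r ≥ (0 : ℝ), u r ≤ umax := fun r hr => (le_abs_self _).trans (hub r hr)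
  have hlinear : ∀ ⦃s⦄, s ∈ Icc 0 tc → x s ≤ q - clin * s :=
    le_of_sat_upper_solution hc.le (hxc.mono Icc_subset_Ici_self)
      (fun r hr => hx' r hr.1) (fun r hr => hu_le r hr.1) (by fun_prop)
      (fun r hr => (hasDerivAt_linear_phase hd.le hclin (by nlinarith [hr.2])).hasDerivWithinAt)
      (by simp [hx0])
  rcases lt_or_ge t tc with htt | htt
  · rw [linexp_of_le htt.le, indicator_of_notMem (notMem_Ici.mpr htt), add_zero]
    exact hlinear ⟨ht, htt.le⟩
  · have hexp := le_of_sat_upper_solution hc.le (hxc.mono (Icc_subset_Ici_iff htt |>.mpr htc0))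
      (fun r hr => hx' r (htc0.trans hr.1)) (fun r hr => hu_le r (htc0.trans hr.1)) (by fun_prop)
      (fun r hr => (hasDerivAt_exponential_phase hc humax0 humax.le hr.1).hasDerivWithinAt)
      (by simpa [hqd] using hlinear ⟨htc0, le_rfl⟩) ⟨htt, le_rfl⟩
    rw [linexp_of_ge htt, indicator_of_mem (mem_Ici.mpr htt), hqd]
    exact hexp.trans_eq (by ring)

/-- solutions of the saturated scalar ODE with bounded additive
input `x' = -c_exp·sat_d(x) + u(t)`, `x(0) = q > d`, are bounded by a
linear-exponential function plus an input-dependent term active after the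
crossing time. -/
theorem stmt6 (cexp d q umax clin tc : ℝ) (hc : 0 < cexp) (hd : 0 < d) (hq : d < q)
    (humax0 : 0 ≤ umax) (humax : umax < d * cexp)
    (hclin : clin = d * cexp - umax) (htc : tc = (q - d) / clin)
    (u : ℝ → ℝ) (hu : ContinuousOn u (Set.Ici 0))
    (hub : ∀ t ≥ (0:ℝ), |u t| ≤ umax)
    (x : ℝ → ℝ) (hx0 : x 0 = q)
    (hx : ∀ t ≥ (0:ℝ), HasDerivWithinAt x (-cexp * sat d (x t) + u t) (Set.Ici 0) t) :
    ∀ t ≥ (0:ℝ), x t ≤ linexp q clin cexp tc t +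
      Set.indicator (Set.Ici tc)
        (fun s => (1 - Real.exp (-cexp * (s - tc))) * umax / cexp) t :=
  stmt6_general cexp d q umax clin tc hc hd hq humax0 humax hclin htc u hub x hx0 hx
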